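/- Let b > 1 be a real number, let h₀, r, ν be real numbers, let s > 0 and q > 0 be real numbers (the pump's relative speed and flow), and let hᵢ, hⱼ be real numbers. Then the pump head-gain equation hᵢ − hⱼ = −s²·(h₀ − r·(q/s)^ν) holds if and only if b^(hᵢ) · (b^(hⱼ))⁻¹ = (b^s)^(−s·h₀) · (b^q)^( r · q^(ν−1) · s^(2−ν) ), where all powers are real exponentiation of positive reals. -/

import Mathlib

/-!
Taking log base `b` of the monomial equation gives `hᵢ - hⱼ = s·C₁ + q·C₂`, and since
`q · q^(ν-1) · s^(2-ν) = s² · (q/s)^ν` for `q, s > 0`, the right-hand side is exactly the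
pump head gain `-s²·(h₀ - r·(q/s)^ν)`.
-/

open Real

lemma rpow_mul_rpow_inv {b : ℝ} (hb : 0 < b) (x y : ℝ) :
    b ^ x * (b ^ y)⁻¹ = b ^ (x - y) := by
  rw [← div_eq_mul_inv, rpow_sub hb]

lemma rpow_rpow_mul_rpow_rpow {b : ℝ} (hb : 0 < b) (x y c d : ℝ) :
    (b ^ x) ^ c * (b ^ y) ^ d = b ^ (x * c + y * d) := by
  rw [← rpow_mul hb.le, ← rpow_mul hb.le, rpow_add hb]

lemma pump_exponent_eq_head_gain {s q : ℝ} (hs : 0 < s) (hq : 0 < q) (h₀ r ν : ℝ) :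
    s * -(s * h₀) + q * (r * q ^ (ν - 1) * s ^ (2 - ν)) =
      -(s ^ 2) * (h₀ - r * (q / s) ^ ν) := by
  rw [div_rpow hq.le hs.le, rpow_sub hq, rpow_sub hs, rpow_one, rpow_two]
  field_simp
  ring

theorem pump_headgain_iff_monomial
    (b : ℝ) (hb : 1 < b) (h₀ r ν : ℝ)
    (s q : ℝ) (hs : 0 < s) (hq : 0 < q)
    (hi hj : ℝ) :
    hi - hj = -(s ^ 2) * (h₀ - r * (q / s) ^ ν) ↔
      b ^ hi * (b ^ hj)⁻¹ =
        (b ^ s) ^ (-(s * h₀)) * (b ^ q) ^ (r * q ^ (ν - 1) * s ^ (2 - ν)) := by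
  have hb₀ : 0 < b := zero_lt_one.trans hb
  rw [rpow_mul_rpow_inv hb₀, rpow_rpow_mul_rpow_rpow hb₀, rpow_right_inj hb₀ hb.ne',
    pump_exponent_eq_head_gain hs hq]
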